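/- arXiv:1507.06577 — 3 statements merged into one kernel-verified Lean document; each statement's English description precedes it below -/
import Mathlib

section
/- Let A be a Fréchet algebra with seminorms (p_ℓ). If A has bounded left approximate units — i.e., there is a bounded set B ⊆ A such that for every x ∈ A, ℓ ∈ ℕ and ε > 0 there exists b ∈ B with p_ℓ(bx − x) < ε — then A has a bounded left multiple approximate identity: there is a bounded set W ⊆ A such that for every finite set {a₁,…,a_n} ⊆ A, every ℓ and ε > 0, there is w ∈ W with p_ℓ(w a_i − a_i) < ε for all i. -/
/-- If a Fréchet algebra `A` has bounded left approximate units, then it has a bounded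
left multiple approximate identity. -/
theorem stmt_7 {A : Type*} [Ring A] [Algebra ℂ A] [TopologicalSpace A]
    (p : SeminormFamily ℂ A ℕ) (hp : WithSeminorms p)
    (hpmono : Monotone p)
    (hpsub : ∀ (ℓ : ℕ) (a b : A), p ℓ (a * b) ≤ p ℓ a * p ℓ b)
    (B : Set A)
    (hBbdd : ∀ ℓ : ℕ, ∃ M : ℝ, ∀ b ∈ B, p ℓ b ≤ M)
    (hunits : ∀ x : A, ∀ ℓ : ℕ, ∀ ε > (0 : ℝ), ∃ b ∈ B, p ℓ (b * x - x) < ε) :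
    ∃ W : Set A, (∀ ℓ : ℕ, ∃ M : ℝ, ∀ w ∈ W, p ℓ w ≤ M) ∧
      ∀ (s : Finset A) (ℓ : ℕ), ∀ ε > (0 : ℝ), ∃ w ∈ W, ∀ a ∈ s, p ℓ (w * a - a) < ε := by
  have hsub : ∀ (ℓ : ℕ) (x y : A), p ℓ (x - y) ≤ p ℓ x + p ℓ y := by
    intro ℓ x y
    calc p ℓ (x - y) = p ℓ (x + (-y)) := by rw [sub_eq_add_neg]
      _ ≤ p ℓ x + p ℓ (-y) := map_add_le_add _ _ _
      _ = p ℓ x + p ℓ y := by rw [map_neg_eq_map]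
  -- Step 1: multiple approximation by arbitrary elements of A (unbounded is fine)
  have aux : ∀ (s : Finset A) (ℓ : ℕ) (ε : ℝ), 0 < ε →
      ∃ f : A, ∀ a ∈ s, p ℓ (f * a - a) < ε := by
    classical
    intro s
    induction s using Finset.induction_on with
    | empty => intro ℓ ε hε; exact ⟨0, by simp⟩
    | insert x s hx ih =>
      intro ℓ ε hε
      obtain ⟨M, hM⟩ := hBbdd ℓ
      set M' := max M 0 with hM'def
      have hM0 : (0 : ℝ) ≤ M' := le_max_right _ _
      have h1M : (0 : ℝ) < 1 + M' := by linarith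
      obtain ⟨f, hf⟩ := ih ℓ (ε / (1 + M')) (by positivity)
      obtain ⟨u, huB, hu⟩ := hunits (x - f * x) ℓ ε hε
      have huM : p ℓ u ≤ M' := le_trans (hM u huB) (le_max_left _ _)
      refine ⟨u + f - u * f, ?_⟩
      intro a ha
      rcases Finset.mem_insert.mp ha with rfl | ha
      · have he : (u + f - u * f) * a - a = u * (a - f * a) - (a - f * a) := by
          noncomm_ring
        rw [he]; exact hu
      · have he : (u + f - u * f) * a - a = (f * a - a) - u * (f * a - a) := by
          noncomm_ring
        rw [he]
        have hfa : p ℓ (f * a - a) < ε / (1 + M') := hf a ha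
        calc p ℓ ((f * a - a) - u * (f * a - a))
            ≤ p ℓ (f * a - a) + p ℓ (u * (f * a - a)) := hsub _ _ _
          _ ≤ p ℓ (f * a - a) + p ℓ u * p ℓ (f * a - a) := by
              gcongr; exact hpsub _ _ _
          _ ≤ p ℓ (f * a - a) + M' * p ℓ (f * a - a) := by
              gcongr
          _ = (1 + M') * p ℓ (f * a - a) := by ring
          _ < (1 + M') * (ε / (1 + M')) := by
              exact mul_lt_mul_of_pos_left hfa h1M
          _ = ε := by field_simp
  -- Step 2: B itself is a bounded left multiple approximate identity
  refine ⟨B, hBbdd, ?_⟩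
  intro s ℓ ε hε
  obtain ⟨M, hM⟩ := hBbdd ℓ
  set M' := max M 0 with hM'def
  have hM0 : (0 : ℝ) ≤ M' := le_max_right _ _
  have h1M : (0 : ℝ) < 1 + M' := by linarith
  set C : ℝ := 1 + ∑ a ∈ s, p ℓ a with hCdef
  have hC0 : (0 : ℝ) < C := by
    have : (0 : ℝ) ≤ ∑ a ∈ s, p ℓ a :=
      Finset.sum_nonneg fun a _ => apply_nonneg _ _
    simp only [hCdef]; linarith
  have hCa : ∀ a ∈ s, p ℓ a ≤ C := by
    intro a ha
    have h1 : p ℓ a ≤ ∑ b ∈ s, p ℓ b :=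
      Finset.single_le_sum (f := fun b => p ℓ b) (fun b _ => apply_nonneg _ _) ha
    simp only [hCdef]; linarith
  obtain ⟨f, hf⟩ := aux s ℓ (ε / (2 * (1 + M'))) (by positivity)
  obtain ⟨u, huB, hu⟩ := hunits f ℓ (ε / (2 * C)) (by positivity)
  have huM : p ℓ u ≤ M' := le_trans (hM u huB) (le_max_left _ _)
  refine ⟨u, huB, ?_⟩
  intro a ha
  have hdecomp : u * a - a = u * (a - f * a) + (u * f - f) * a + (f * a - a) := by
    noncomm_ring
  rw [hdecomp]
  have h1 : p ℓ (u * (a - f * a)) ≤ M' * (ε / (2 * (1 + M'))) := by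
    have e1 : p ℓ (a - f * a) = p ℓ (f * a - a) := by
      rw [← neg_sub, map_neg_eq_map]
    calc p ℓ (u * (a - f * a)) ≤ p ℓ u * p ℓ (a - f * a) := hpsub _ _ _
      _ ≤ M' * (ε / (2 * (1 + M'))) := by
          apply mul_le_mul huM _ (apply_nonneg _ _) hM0
          rw [e1]; exact le_of_lt (hf a ha)
  have h2 : p ℓ ((u * f - f) * a) ≤ (ε / (2 * C)) * C := by
    calc p ℓ ((u * f - f) * a) ≤ p ℓ (u * f - f) * p ℓ a := hpsub _ _ _
      _ ≤ (ε / (2 * C)) * C := by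
          apply mul_le_mul (le_of_lt hu) (hCa a ha) (apply_nonneg _ _)
          positivity
  have h3 : p ℓ (f * a - a) < ε / (2 * (1 + M')) := hf a ha
  have htri : p ℓ (u * (a - f * a) + (u * f - f) * a + (f * a - a)) ≤
      p ℓ (u * (a - f * a)) + p ℓ ((u * f - f) * a) + p ℓ (f * a - a) := by
    calc p ℓ (u * (a - f * a) + (u * f - f) * a + (f * a - a))
        ≤ p ℓ (u * (a - f * a) + (u * f - f) * a) + p ℓ (f * a - a) :=
          map_add_le_add _ _ _
      _ ≤ p ℓ (u * (a - f * a)) + p ℓ ((u * f - f) * a) + p ℓ (f * a - a) := by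
          gcongr; exact map_add_le_add _ _ _
  have hfinal : M' * (ε / (2 * (1 + M'))) + (ε / (2 * C)) * C +
      ε / (2 * (1 + M')) = ε := by
    field_simp
    ring
  linarith
end

section
/- Let B be a symmetric Segal Fréchet algebra in a Fréchet algebra A, and assume B has left approximate units: for each b ∈ B, m ∈ ℕ, ε > 0 there exists u ∈ B with q_m(b − ub) < ε. If I is a closed left ideal in B, then I = cl_A(I) ∩ B. -/
/-!
Let `b ∈ B` with `j b ∈ cl_A (j I)`, and fix a seminorm `q_m` and `ε > 0`. An approximate unit
`u` gives `q_m (b - u b) < ε / 2`. By the estimate `q_m (u a) ≤ C p_ℓ(a) q_n(u)` for the product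
`B × A → B`, choosing `y ∈ I` with `j y` close enough to `j b` in `A` gives `q_m (u b - u y) < ε / 2`.
Since `I` is a left ideal, `u y ∈ I`, so `b` lies in the `B`-closure of `I`, which is `I`.
-/

namespace WithSeminorms

variable {𝕜 E ι : Type*} [NormedField 𝕜] [AddCommGroup E] [Module 𝕜 E] [TopologicalSpace E]
  {p : SeminormFamily 𝕜 E ι} {s : Set E} {x : E}

theorem exists_sub_lt_of_mem_closure (hp : WithSeminorms p) (hx : x ∈ closure s) (i : ι)
    {ε : ℝ} (hε : 0 < ε) : ∃ y ∈ s, p i (x - y) < ε := by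
  obtain ⟨y, hy, hyx⟩ := (mem_closure_iff_nhds_basis hp.hasBasis_ball).1 hx ⟨{i}, ε⟩ hε
  rw [Finset.sup_singleton, Seminorm.mem_ball, map_sub_rev] at hyx
  exact ⟨y, hy, hyx⟩

theorem mem_closure_of_forall_exists_sub_lt [Nonempty ι] [Preorder ι] [IsDirectedOrder ι]
    (hp : WithSeminorms p) (hmono : Monotone p)
    (h : ∀ i, ∀ ε > 0, ∃ y ∈ s, p i (x - y) < ε) : x ∈ closure s := by
  refine (mem_closure_iff_nhds_basis hp.hasBasis_ball).2 ?_
  rintro ⟨t, ε⟩ (hε : 0 < ε)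
  obtain ⟨i, hi⟩ := t.exists_le
  obtain ⟨y, hy, hxy⟩ := h i ε hε
  refine ⟨y, hy, ?_⟩
  rw [Seminorm.mem_ball, map_sub_rev]
  exact lt_of_le_of_lt (Finset.sup_le (fun k hk ↦ hmono (hi k hk)) (x - y)) hxy

end WithSeminorms

theorem mem_closure_of_apply_mem_closure_image {𝕜 A B ι κ : Type*} [NormedField 𝕜]
    [Ring A] [Module 𝕜 A] [TopologicalSpace A] [Ring B] [Module 𝕜 B] [TopologicalSpace B]
    [Nonempty κ] [Preorder κ] [IsDirectedOrder κ]
    {p : SeminormFamily 𝕜 A ι} {q : SeminormFamily 𝕜 B κ}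
    (hp : WithSeminorms p) (hq : WithSeminorms q) (hqmono : Monotone q)
    {j : B →ₗ[𝕜] A} (hjmul : ∀ b b' : B, j (b * b') = j b * j b')
    (hmul_r : ∀ m : κ, ∃ C : ℝ, 0 < C ∧ ∃ (ℓ : ι) (n : κ), ∀ (a : A) (b c : B),
      j c = j b * a → q m c ≤ C * p ℓ a * q n b)
    (hunits : ∀ b : B, ∀ m : κ, ∀ ε > (0 : ℝ), ∃ u : B, q m (b - u * b) < ε)
    {I : Set B} (hI : ∀ b : B, ∀ x ∈ I, b * x ∈ I) {b : B} (hb : j b ∈ closure (j '' I)) :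
    b ∈ closure I := by
  refine hq.mem_closure_of_forall_exists_sub_lt hqmono fun m ε hε ↦ ?_
  obtain ⟨u, hu⟩ := hunits b m (ε / 2) (half_pos hε)
  obtain ⟨C, hC, ℓ, n, hmul⟩ := hmul_r m
  have hden : 0 < C * q n u + 1 := by positivity
  obtain ⟨_, ⟨y, hy, rfl⟩, hby⟩ :=
    hp.exists_sub_lt_of_mem_closure hb ℓ (div_pos (half_pos hε) hden)
  have hclose : q m (u * b - u * y) < ε / 2 := calc
    q m (u * b - u * y) ≤ C * p ℓ (j b - j y) * q n u :=
      hmul _ _ _ (by rw [map_sub, hjmul, hjmul, mul_sub])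
    _ = p ℓ (j b - j y) * (C * q n u) := by ring
    _ ≤ p ℓ (j b - j y) * (C * q n u + 1) := by gcongr; linarith
    _ < ε / 2 := (lt_div_iff₀ hden).1 hby
  refine ⟨u * y, hI u y hy, ?_⟩
  calc q m (b - u * y) ≤ q m (b - u * b) + q m (u * b - u * y) := le_map_sub_add_map_sub _ _ _ _
    _ < ε := by linarith

theorem stmt_14_general {A B : Type*}
    [Ring A] [Algebra ℂ A] [UniformSpace A]
    [Ring B] [Algebra ℂ B] [UniformSpace B]
    (p : SeminormFamily ℂ A ℕ) (q : SeminormFamily ℂ B ℕ)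
    (hp : WithSeminorms p) (hq : WithSeminorms q)
    (hqmono : Monotone q)
    (j : B →ₗ[ℂ] A)
    (hjmul : ∀ b b' : B, j (b * b') = j b * j b')
    (hmul_r : ∀ m : ℕ, ∃ C : ℝ, 0 < C ∧ ∃ ℓ n : ℕ, ∀ (a : A) (b c : B),
      j c = j b * a → q m c ≤ C * p ℓ a * q n b)
    (hunits : ∀ b : B, ∀ m : ℕ, ∀ ε > (0 : ℝ), ∃ u : B, q m (b - u * b) < ε)
    (I : Set B) (hIclosed : IsClosed I) (hI : ∀ b : B, ∀ x ∈ I, b * x ∈ I) :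
    ∀ b : B, b ∈ I ↔ j b ∈ closure (j '' I) := by
  intro b
  refine ⟨fun hb ↦ subset_closure ⟨b, hb, rfl⟩, fun hb ↦ ?_⟩
  rw [← hIclosed.closure_eq]
  exact mem_closure_of_apply_mem_closure_image hp hq hqmono hjmul hmul_r hunits hI hb

/-- If `B` is a symmetric Segal Fréchet algebra in `A` having left approximate units,
then every closed left ideal `I` of `B` satisfies `I = cl_A(I) ∩ B`. -/
theorem stmt_14 {A B : Type*}
    [Ring A] [Algebra ℂ A] [UniformSpace A] [IsUniformAddGroup A] [CompleteSpace A]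
    [Ring B] [Algebra ℂ B] [UniformSpace B] [IsUniformAddGroup B] [CompleteSpace B]
    (p : SeminormFamily ℂ A ℕ) (q : SeminormFamily ℂ B ℕ)
    (hp : WithSeminorms p) (hq : WithSeminorms q)
    (hpmono : Monotone p) (hqmono : Monotone q)
    (hpsub : ∀ (ℓ : ℕ) (a a' : A), p ℓ (a * a') ≤ p ℓ a * p ℓ a')
    (hqsub : ∀ (m : ℕ) (b b' : B), q m (b * b') ≤ q m b * q m b')
    (j : B →ₗ[ℂ] A) (hjinj : Function.Injective j)
    (hjmul : ∀ b b' : B, j (b * b') = j b * j b')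
    (hdense : DenseRange j) (hjcont : Continuous j)
    (hideal_l : ∀ (a : A) (b : B), ∃ c : B, j c = a * j b)
    (hideal_r : ∀ (a : A) (b : B), ∃ c : B, j c = j b * a)
    (hmul_l : ∀ m : ℕ, ∃ C : ℝ, 0 < C ∧ ∃ ℓ n : ℕ, ∀ (a : A) (b c : B),
      j c = a * j b → q m c ≤ C * p ℓ a * q n b)
    (hmul_r : ∀ m : ℕ, ∃ C : ℝ, 0 < C ∧ ∃ ℓ n : ℕ, ∀ (a : A) (b c : B),
      j c = j b * a → q m c ≤ C * p ℓ a * q n b)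
    (hunits : ∀ b : B, ∀ m : ℕ, ∀ ε > (0 : ℝ), ∃ u : B, q m (b - u * b) < ε)
    (I : Set B) (hIclosed : IsClosed I) (hI : ∀ b : B, ∀ x ∈ I, b * x ∈ I) :
    ∀ b : B, b ∈ I ↔ j b ∈ closure (j '' I) :=
  stmt_14_general p q hp hq hqmono j hjmul hmul_r hunits I hIclosed hI
end

section
/- Let B be a symmetric Segal Fréchet algebra in a Fréchet algebra A with left approximate units. Then the map J ↦ J ∩ B gives a surjection from closed left ideals of A onto closed left ideals of B: for every closed left ideal I of B there exists a closed left ideal J of A, namely J = cl_A(I), with I = J ∩ B. -/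
open Filter Topology

/-- Membership in the closure characterized by single seminorms, for a monotone family. -/
lemma aux_mem_closure {E : Type*} [AddCommGroup E] [Module ℂ E]
    [UniformSpace E] [IsUniformAddGroup E]
    (p : SeminormFamily ℂ E ℕ) (hp : WithSeminorms p) (hmono : Monotone p)
    (S : Set E) (x : E) :
    x ∈ closure S ↔ ∀ m : ℕ, ∀ ε > (0 : ℝ), ∃ y ∈ S, p m (x - y) < ε := by
  rw [mem_closure_iff_nhds_basis hp.hasBasis_ball]
  constructor
  · intro h m ε hε
    obtain ⟨y, hyS, hy⟩ := h ({m}, ε) hε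
    rw [Seminorm.mem_ball, Finset.sup_singleton] at hy
    exact ⟨y, hyS, by rwa [map_sub_rev] at hy⟩
  · rintro h ⟨s, ε⟩ hε
    rcases s.eq_empty_or_nonempty with rfl | hs
    · obtain ⟨y, hyS, -⟩ := h 0 1 one_pos
      refine ⟨y, hyS, ?_⟩
      rw [Seminorm.mem_ball]
      simpa using hε
    · obtain ⟨y, hyS, hy⟩ := h (s.max' hs) ε hε
      refine ⟨y, hyS, ?_⟩
      rw [Seminorm.mem_ball]
      calc (s.sup p) (y - x) ≤ p (s.max' hs) (y - x) :=
            (Finset.sup_le fun i hi => hmono (s.le_max' i hi) : s.sup p ≤ p (s.max' hs)) (y - x)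
        _ = p (s.max' hs) (x - y) := map_sub_rev _ _ _
        _ < ε := hy

/-- For a symmetric Segal Fréchet algebra `B` in `A` with left approximate units, every
closed left ideal `I` of `B` is of the form `J ∩ B` for a closed left ideal `J` of `A`
(namely `J = cl_A(I)`). -/
theorem stmt_15 {A B : Type*}
    [Ring A] [Algebra ℂ A] [UniformSpace A] [IsUniformAddGroup A] [CompleteSpace A]
    [Ring B] [Algebra ℂ B] [UniformSpace B] [IsUniformAddGroup B] [CompleteSpace B]
    (p : SeminormFamily ℂ A ℕ) (q : SeminormFamily ℂ B ℕ)
    (hp : WithSeminorms p) (hq : WithSeminorms q)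
    (hpmono : Monotone p) (hqmono : Monotone q)
    (hpsub : ∀ (ℓ : ℕ) (a a' : A), p ℓ (a * a') ≤ p ℓ a * p ℓ a')
    (hqsub : ∀ (m : ℕ) (b b' : B), q m (b * b') ≤ q m b * q m b')
    (j : B →ₗ[ℂ] A) (hjinj : Function.Injective j)
    (hjmul : ∀ b b' : B, j (b * b') = j b * j b')
    (hdense : DenseRange j) (hjcont : Continuous j)
    (hideal_l : ∀ (a : A) (b : B), ∃ c : B, j c = a * j b)
    (hideal_r : ∀ (a : A) (b : B), ∃ c : B, j c = j b * a)
    (hmul_l : ∀ m : ℕ, ∃ C : ℝ, 0 < C ∧ ∃ ℓ n : ℕ, ∀ (a : A) (b c : B),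
      j c = a * j b → q m c ≤ C * p ℓ a * q n b)
    (hmul_r : ∀ m : ℕ, ∃ C : ℝ, 0 < C ∧ ∃ ℓ n : ℕ, ∀ (a : A) (b c : B),
      j c = j b * a → q m c ≤ C * p ℓ a * q n b)
    (hunits : ∀ b : B, ∀ m : ℕ, ∀ ε > (0 : ℝ), ∃ u : B, q m (b - u * b) < ε)
    (I : Set B) (hIclosed : IsClosed I) (hI : ∀ b : B, ∀ x ∈ I, b * x ∈ I) :
    ∃ J : Set A, IsClosed J ∧ (∀ a : A, ∀ x ∈ J, a * x ∈ J) ∧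
      ∀ b : B, b ∈ I ↔ j b ∈ J := by
  -- left multiplication on `A` is continuous
  have hmulcont : ∀ a : A, Continuous fun x : A => a * x := by
    intro a
    have hb : Seminorm.IsBounded p p (LinearMap.mulLeft ℂ a) := by
      intro i
      refine ⟨{i}, ⟨p i a, apply_nonneg _ _⟩, fun x => ?_⟩
      simp only [Seminorm.comp_apply, LinearMap.mulLeft_apply, Seminorm.smul_apply,
        Finset.sup_singleton, NNReal.smul_def, smul_eq_mul, NNReal.coe_mk]
      exact hpsub i a x
    exact Seminorm.continuous_from_bounded hp hp (LinearMap.mulLeft ℂ a) hb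
  set J : Set A := closure (j '' I) with hJ
  -- every b is approximated by u * b
  have hT : ∀ b : B, b ∈ closure {x : B | ∃ u : B, x = u * b} := by
    intro b
    rw [aux_mem_closure q hq hqmono]
    intro m ε hε
    obtain ⟨u, hu⟩ := hunits b m ε hε
    exact ⟨u * b, ⟨u, rfl⟩, hu⟩
  -- key step: a * j b ∈ J for b ∈ I
  have hstepA : ∀ (a : A) (b : B), b ∈ I → a * j b ∈ J := by
    intro a b hb
    have h1 : j b ∈ closure (j '' {x : B | ∃ u : B, x = u * b}) :=
      image_closure_subset_closure_image hjcont ⟨b, hT b, rfl⟩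
    have h2 : a * j b ∈ closure ((a * ·) '' (j '' {x : B | ∃ u : B, x = u * b})) :=
      image_closure_subset_closure_image (hmulcont a) ⟨j b, h1, rfl⟩
    refine closure_mono ?_ h2
    rintro _ ⟨_, ⟨x, ⟨u, rfl⟩, rfl⟩, rfl⟩
    obtain ⟨c, hc⟩ := hideal_l a u
    refine ⟨c * b, hI c b hb, ?_⟩
    rw [hjmul, hc, hjmul, mul_assoc]
  refine ⟨J, isClosed_closure, ?_, ?_⟩
  · -- J is a left ideal
    intro a x hx
    have h1 : a * x ∈ closure ((a * ·) '' (j '' I)) :=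
      image_closure_subset_closure_image (hmulcont a) ⟨x, hx, rfl⟩
    have hsub : (a * ·) '' (j '' I) ⊆ J := by
      rintro _ ⟨_, ⟨b, hb, rfl⟩, rfl⟩
      exact hstepA a b hb
    exact isClosed_closure.closure_subset_iff.mpr hsub h1
  · intro b
    constructor
    · intro hb
      exact subset_closure ⟨b, hb, rfl⟩
    · -- the hard direction
      intro hjb
      rw [← hIclosed.closure_eq]
      rw [aux_mem_closure q hq hqmono]
      intro m ε hε
      obtain ⟨u, hu⟩ := hunits b m (ε / 2) (by linarith)
      obtain ⟨C, hC, ℓ, n, hest⟩ := hmul_r m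
      set δ : ℝ := ε / 2 / (C * (q n u + 1)) with hδdef
      have hpos : 0 < C * (q n u + 1) := by positivity
      have hδ : 0 < δ := by positivity
      rw [hJ, aux_mem_closure p hp hpmono] at hjb
      obtain ⟨y, ⟨x, hxI, rfl⟩, hy⟩ := hjb ℓ δ hδ
      refine ⟨u * x, hI u x hxI, ?_⟩
      have hkey : q m (u * b - u * x) ≤ ε / 2 := by
        have heq : j (u * b - u * x) = j u * (j b - j x) := by
          rw [map_sub, hjmul, hjmul, mul_sub]
        have := hest (j b - j x) u (u * b - u * x) heq
        calc q m (u * b - u * x) ≤ C * p ℓ (j b - j x) * q n u := this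
          _ ≤ C * δ * (q n u + 1) := by
              have h1 : p ℓ (j b - j x) ≤ δ := le_of_lt hy
              have h2 : (0:ℝ) ≤ q n u := apply_nonneg _ _
              nlinarith [apply_nonneg (p ℓ) (j b - j x)]
          _ = ε / 2 := by
              rw [hδdef]
              field_simp
      calc q m (b - u * x) = q m ((b - u * b) + (u * b - u * x)) := by
            rw [sub_add_sub_cancel]
        _ ≤ q m (b - u * b) + q m (u * b - u * x) := map_add_le_add _ _ _
        _ < ε / 2 + ε / 2 := by linarith
        _ = ε := by ring
end
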